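/- Let η = Σ_{i∈I} A_i ⊗ B_i be an (m_A·m_B)×(m_A·m_B) Hermitian positive-definite complex matrix, where ⊗ is the Kronecker product, {A_i : i ∈ I} is a linearly independent family of m_A×m_A matrices, and {B_i : i ∈ I} is a linearly independent family of m_B×m_B matrices. If |I| > (m_B − 1)² + 1, then every m_B×m_B complex matrix O_B satisfying η · (1 ⊗ O_B) = (1 ⊗ O_B)ᴴ · η is a scalar multiple of the identity. -/

import Mathlib

open scoped ComplexOrder Matrix Kronecker

/-!
Expanding the quasi-Hermiticity condition in the product basis and using the linear independence
of the `A i` gives `B i * OB = OBᴴ * B i` for every `i`. Compressing `η` to the block `{a} × Fin mB`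
gives a positive definite `ηB = ∑ i, A i a a • B i` with the same property, so `OB` is
self-adjoint for the inner product defined by `ηB`: `OB * P = P * D` for an invertible `P` and a
real diagonal `D`. Then the matrices `Pᴴ * B i * P` are linearly independent and commute with `D`,
so they vanish outside the pairs `(p, q)` with `D p = D q`. If `OB` is not scalar, `D` takes at
least two values, and there are at most `(mB - 1)² + 1` such pairs.
-/

open Finset

theorem card_filter_apply_eq_apply_le_of_ne {α β : Type*} [Fintype α] [DecidableEq β]
    (d : α → β) {p q : α} (h : d p ≠ d q) :
    #{pq : α × α | d pq.1 = d pq.2} ≤ (Fintype.card α - 1) ^ 2 + 1 := by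
  classical
  set C : Finset α := {x | d x = d p}
  have hsub : ({pq : α × α | d pq.1 = d pq.2} : Finset _) ⊆ C ×ˢ C ∪ Cᶜ ×ˢ Cᶜ := by
    intro pq
    simp only [mem_filter, mem_univ, true_and, mem_union, mem_product, mem_compl, C]
    intro hpq
    rw [← hpq]
    tauto
  have hC : 1 ≤ #C := card_pos.mpr ⟨p, by simp [C]⟩
  have hCc : 1 ≤ #Cᶜ := card_pos.mpr ⟨q, by simp [C, Ne.symm h]⟩
  have hsum : #C + #Cᶜ = Fintype.card α := card_add_card_compl C
  calc _ ≤ #(C ×ˢ C ∪ Cᶜ ×ˢ Cᶜ) := card_le_card hsub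
    _ ≤ #C * #C + #Cᶜ * #Cᶜ := by
      simpa only [card_product] using card_union_le (C ×ˢ C) (Cᶜ ×ˢ Cᶜ)
    _ ≤ (Fintype.card α - 1) ^ 2 + 1 := by
      obtain ⟨a, ha⟩ : ∃ a, #C = a + 1 := ⟨#C - 1, by omega⟩
      obtain ⟨b, hb⟩ : ∃ b, #Cᶜ = b + 1 := ⟨#Cᶜ - 1, by omega⟩
      rw [← hsum, ha, hb, show a + 1 + (b + 1) - 1 = a + b + 1 by omega]
      nlinarith

namespace Matrix

section Kronecker

variable {ι R l m n p : Type*} [Fintype ι]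

theorem eq_of_sum_kronecker_eq_sum_kronecker [CommRing R] {A : ι → Matrix l m R}
    (hA : LinearIndependent R A) {X Y : ι → Matrix n p R}
    (h : ∑ i, A i ⊗ₖ X i = ∑ i, A i ⊗ₖ Y i) : X = Y := by
  funext i
  ext a b
  refine sub_eq_zero.mp <| Fintype.linearIndependent_iff.mp hA (fun j ↦ X j a b - Y j a b) ?_ i
  ext r s
  have hrs := congrFun (congrFun h (r, a)) (s, b)
  simp only [sum_apply, kroneckerMap_apply] at hrs
  simp only [sum_apply, smul_apply, smul_eq_mul, zero_apply, sub_mul, sum_sub_distrib, sub_eq_zero]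
  simpa only [mul_comm] using hrs

theorem submatrix_sum_kronecker [Semiring R] (A : ι → Matrix l m R) (B : ι → Matrix n p R)
    (a : l) (b : m) :
    (∑ i, A i ⊗ₖ B i).submatrix (Prod.mk a) (Prod.mk b) = ∑ i, A i a b • B i := by
  ext r s
  simp [sum_apply]

end Kronecker

section Commutant

variable {ι K n : Type*} [Fintype ι] [Fintype n] [DecidableEq n]

theorem apply_eq_zero_of_commute_diagonal [CommRing K] [IsDomain K] {d : n → K}
    {Y : Matrix n n K} (hY : Commute Y (diagonal d)) {p q : n} (hpq : d p ≠ d q) :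
    Y p q = 0 := by
  have h := congrFun (congrFun hY.eq p) q
  rw [mul_diagonal, diagonal_mul, mul_comm] at h
  exact (mul_eq_mul_right_iff.mp h).resolve_left hpq.symm

theorem card_le_of_linearIndependent_commute_diagonal [Field K] [DecidableEq K] {d : n → K}
    {Y : ι → Matrix n n K} (hY : LinearIndependent K Y)
    (hYd : ∀ i, Commute (Y i) (diagonal d)) :
    Fintype.card ι ≤ #{pq : n × n | d pq.1 = d pq.2} := by
  set E : Finset (n × n) := {pq : n × n | d pq.1 = d pq.2}
  have hres : LinearIndependent K fun i (e : E) ↦ Y i e.1.1 e.1.2 := by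
    refine Fintype.linearIndependent_iff.mpr fun g hg ↦ Fintype.linearIndependent_iff.mp hY g ?_
    ext p q
    by_cases hpq : d p = d q
    · simpa [sum_apply] using congrFun hg ⟨(p, q), by simp [E, hpq]⟩
    · simp [sum_apply, apply_eq_zero_of_commute_diagonal (hYd _) hpq]
  simpa using hres.fintype_card_le_finrank

end Commutant

section QuasiHermitian

variable {ι n 𝕜 : Type*} [Fintype n] [DecidableEq n] [RCLike 𝕜]

theorem PosDef.exists_isUnit_eq_conjTranspose_mul_self {η : Matrix n n 𝕜} (hη : η.PosDef) :
    ∃ S : Matrix n n 𝕜, IsUnit S ∧ η = Sᴴ * S := by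
  open scoped MatrixOrder Matrix.Norms.L2Operator in
  exact CStarAlgebra.isStrictlyPositive_iff_eq_star_mul_self.mp hη.isStrictlyPositive

theorem IsHermitian.exists_isUnit_mul_eq_mul_diagonal {M : Matrix n n 𝕜} (hM : M.IsHermitian) :
    ∃ P : Matrix n n 𝕜, IsUnit P ∧ ∃ d : n → ℝ, M * P = P * diagonal (fun i ↦ (d i : 𝕜)) := by
  set U := hM.eigenvectorUnitary
  refine ⟨U, (Unitary.toUnits U).isUnit, hM.eigenvalues, ?_⟩
  simpa [U, mul_assoc, Function.comp_def] using
    congrArg (· * (U : Matrix n n 𝕜)) hM.spectral_theorem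

theorem exists_isUnit_mul_eq_mul_diagonal_of_posDef {η O : Matrix n n 𝕜} (hη : η.PosDef)
    (hO : η * O = Oᴴ * η) :
    ∃ P : Matrix n n 𝕜, IsUnit P ∧ ∃ d : n → ℝ, O * P = P * diagonal (fun i ↦ (d i : 𝕜)) := by
  obtain ⟨S, hS, rfl⟩ := hη.exists_isUnit_eq_conjTranspose_mul_self
  have hSdet := (isUnit_iff_isUnit_det S).mp hS
  have hSHdet : IsUnit Sᴴ.det := by simpa using hSdet.star
  have hM : (S * O * S⁻¹).IsHermitian := by
    refine (isUnit_iff_isUnit_det _ |>.mpr hSHdet).mul_right_injective <|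
      hS.mul_left_injective ?_
    simp only [conjTranspose_mul, conjTranspose_nonsing_inv, mul_assoc, nonsing_inv_mul _ hSdet,
      mul_nonsing_inv_cancel_left _ _ hSHdet, mul_one] at hO ⊢
    exact hO.symm
  obtain ⟨P, hP, d, hPd⟩ := hM.exists_isUnit_mul_eq_mul_diagonal
  refine ⟨S⁻¹ * P, (isUnit_nonsing_inv_iff.mpr hS).mul hP, d, ?_⟩
  rw [mul_assoc, ← hPd]
  simp only [mul_assoc, nonsing_inv_mul_cancel_left _ _ hSdet]

theorem commute_conjTranspose_mul_mul_diagonal {O P X : Matrix n n 𝕜} {d : n → ℝ}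
    (hOP : O * P = P * diagonal (fun i ↦ (d i : 𝕜))) (hXO : X * O = Oᴴ * X) :
    Commute (Pᴴ * X * P) (diagonal fun i ↦ (d i : 𝕜)) := by
  have hD : (diagonal fun i ↦ (d i : 𝕜))ᴴ = diagonal fun i ↦ (d i : 𝕜) := by
    simp [diagonal_conjTranspose, Pi.star_def]
  calc Pᴴ * X * P * diagonal (fun i ↦ (d i : 𝕜)) = Pᴴ * (X * O) * P := by
        rw [mul_assoc _ P, ← hOP]; simp only [mul_assoc]
    _ = (O * P)ᴴ * X * P := by rw [hXO, conjTranspose_mul]; simp only [mul_assoc]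
    _ = diagonal (fun i ↦ (d i : 𝕜)) * (Pᴴ * X * P) := by
        rw [hOP, conjTranspose_mul, hD]; simp only [mul_assoc]

variable [Fintype ι]

theorem card_le_of_linearIndependent_mul_eq_conjTranspose_mul [DecidableEq 𝕜]
    {O P : Matrix n n 𝕜} (hP : IsUnit P) {d : n → ℝ}
    (hOP : O * P = P * diagonal (fun i ↦ (d i : 𝕜))) {X : ι → Matrix n n 𝕜}
    (hX : LinearIndependent 𝕜 X) (hXO : ∀ i, X i * O = Oᴴ * X i) :
    Fintype.card ι ≤ #{pq : n × n | (d pq.1 : 𝕜) = d pq.2} := by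
  have hPH : IsUnit Pᴴ := by simpa using hP.star
  have hY : LinearIndependent 𝕜 fun i ↦ Pᴴ * X i * P :=
    hX.map' (LinearMap.mulLeftRight 𝕜 (Pᴴ, P)) <| LinearMap.ker_eq_bot.mpr fun Y Z h ↦
      hPH.mul_right_injective <| hP.mul_left_injective h
  exact card_le_of_linearIndependent_commute_diagonal hY fun i ↦
    commute_conjTranspose_mul_mul_diagonal hOP (hXO i)

end QuasiHermitian

end Matrix

open Matrix

/-- Let `η = ∑ i, A i ⊗ₖ B i` be Hermitian positive definite, with both families
`A` and `B` linearly independent. If the Schmidt number `|ι|` exceeds `(mB - 1)² + 1`, then every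
`OB` such that `1 ⊗ₖ OB` is quasi-Hermitian with respect to `η` is a scalar multiple of the
identity. -/
theorem stmt_9 (mA mB : ℕ) (ι : Type) [Fintype ι]
    (A : ι → Matrix (Fin mA) (Fin mA) ℂ) (B : ι → Matrix (Fin mB) (Fin mB) ℂ)
    (hA : LinearIndependent ℂ A) (hB : LinearIndependent ℂ B)
    (hη : (∑ i, A i ⊗ₖ B i).PosDef)
    (hcard : (mB - 1) ^ 2 + 1 < Fintype.card ι)
    (OB : Matrix (Fin mB) (Fin mB) ℂ)
    (hQH : (∑ i, A i ⊗ₖ B i) * ((1 : Matrix (Fin mA) (Fin mA) ℂ) ⊗ₖ OB)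
        = ((1 : Matrix (Fin mA) (Fin mA) ℂ) ⊗ₖ OB)ᴴ * (∑ i, A i ⊗ₖ B i)) :
    ∃ c : ℂ, OB = c • (1 : Matrix (Fin mB) (Fin mB) ℂ) := by
  obtain ⟨a⟩ : Nonempty (Fin mA) := by
    obtain ⟨i⟩ : Nonempty ι := Fintype.card_pos_iff.mp (by omega)
    by_contra h
    have : IsEmpty (Fin mA) := not_nonempty_iff.mp h
    exact hA.ne_zero i (Subsingleton.elim _ _)
  have hBO : ∀ i, B i * OB = OBᴴ * B i := congrFun <| eq_of_sum_kronecker_eq_sum_kronecker hA <| by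
    simpa only [sum_mul, mul_sum, ← mul_kronecker_mul, mul_one, one_mul, conjTranspose_kronecker,
      conjTranspose_one] using hQH
  set ηB := ∑ i, A i a a • B i
  have hηB : ηB.PosDef := by
    simpa only [submatrix_sum_kronecker] using hη.submatrix (Prod.mk_right_injective a)
  have hOB : ηB * OB = OBᴴ * ηB := by
    simp only [ηB, sum_mul, mul_sum, Matrix.smul_mul, Matrix.mul_smul, hBO]
  obtain ⟨P, hP, d, hPd⟩ := exists_isUnit_mul_eq_mul_diagonal_of_posDef hηB hOB
  by_cases hconst : ∃ c : ℂ, ∀ p, (d p : ℂ) = c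
  · obtain ⟨c, hc⟩ := hconst
    refine ⟨c, hP.mul_left_injective ?_⟩
    simpa [hc, ← smul_one_eq_diagonal] using hPd
  · push Not at hconst
    obtain ⟨p, -⟩ := hconst 0
    obtain ⟨q, hq⟩ := hconst (d p)
    have hle := (card_le_of_linearIndependent_mul_eq_conjTranspose_mul hP hPd hB hBO).trans
      (card_filter_apply_eq_apply_le_of_ne (fun p ↦ (d p : ℂ)) hq)
    rw [Fintype.card_fin] at hle
    omega
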